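/- Let G be an ADMG and let X, Y, Z be pairwise disjoint subsets of its vertices. Let σ be a structure of interest such that: σ is a subgraph of G; σ contains a vertex of X and a vertex of Y; and no non-root vertex of σ lies in Z. If there exists a root R of σ with R ∉ Z such that R is an ancestor of Z in G, then G contains a structure of interest σ' such that: (a) σ' is a subgraph of G; (b) σ' contains a vertex of X and a vertex of Y; (c) no non-root vertex of σ' lies in Z; and (d) Root(σ') \ Z ⊆ (Root(σ) \ Z) \ {R}. -/

import Mathlib

/-!  Mixed graphs, ADMGs, d-separation, structures of interest, and cluster DAGs
(following Anand et al. and the cyclic C-DAG extension). -/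

/-- The way an edge is traversed along a path: `fwd` = directed edge pointing
towards the right endpoint, `bwd` = directed edge pointing towards the left
endpoint, `both` = bidirected edge (arrowheads at both endpoints). -/
inductive Link : Type
  | fwd
  | bwd
  | both
  deriving DecidableEq

/-- Is there an arrowhead at the right endpoint of the link? -/
def Link.headRight : Link → Bool
  | .fwd => true
  | .bwd => false
  | .both => true

/-- Is there an arrowhead at the left endpoint of the link? -/
def Link.headLeft : Link → Bool
  | .fwd => false
  | .bwd => true
  | .both => true

/-- A mixed graph on a vertex set `verts`: a set of directed edges and a
(symmetric) set of bidirected edges, all between vertices of `verts`. -/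
structure MixedGraph (V : Type*) where
  verts : Set V
  dir : V → V → Prop
  bi : V → V → Prop
  dir_mem : ∀ ⦃a b : V⦄, dir a b → a ∈ verts ∧ b ∈ verts
  bi_mem : ∀ ⦃a b : V⦄, bi a b → a ∈ verts ∧ b ∈ verts
  bi_symm : ∀ ⦃a b : V⦄, bi a b → bi b a

namespace MixedGraph

variable {V C : Type*}

/-- `G.Anc v w` : there is a directed path from `v` to `w`
(`v` is an ancestor of `w`, `w` a descendant of `v`). -/
def Anc (G : MixedGraph V) : V → V → Prop := Relation.ReflTransGen G.dir

/-- The set of ancestors of the set `Z` in `G`. -/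
def AncSet (G : MixedGraph V) (Z : Set V) : Set V := {v | ∃ z ∈ Z, G.Anc v z}

/-- The directed part of `G` has no directed cycle. -/
def Acyclic (G : MixedGraph V) : Prop := ∀ ⦃a b : V⦄, G.dir a b → ¬ G.Anc b a

/-- An acyclic directed mixed graph: no directed cycle, and all edges join
distinct vertices. -/
def IsADMG (G : MixedGraph V) : Prop :=
  G.Acyclic ∧ (∀ v, ¬ G.dir v v) ∧ (∀ v, ¬ G.bi v v)

/-- `H` is a subgraph of `G`. -/
def IsSubgraph (H G : MixedGraph V) : Prop :=
  H.verts ⊆ G.verts ∧ (∀ ⦃a b : V⦄, H.dir a b → G.dir a b) ∧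
    (∀ ⦃a b : V⦄, H.bi a b → G.bi a b)

/-- Adjacency, viewing all edges as undirected. -/
def Adj (G : MixedGraph V) (a b : V) : Prop := G.dir a b ∨ G.dir b a ∨ G.bi a b

/-- `G` has a single connected component (viewing all edges as undirected). -/
def Connected (G : MixedGraph V) : Prop :=
  G.verts.Nonempty ∧ ∀ a ∈ G.verts, ∀ b ∈ G.verts, Relation.ReflTransGen G.Adj a b

/-- A root: a vertex with no outgoing directed edge. -/
def IsRoot (G : MixedGraph V) (v : V) : Prop := v ∈ G.verts ∧ ∀ w, ¬ G.dir v w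

/-- The set of roots of `G`. -/
def roots (G : MixedGraph V) : Set V := {v | G.IsRoot v}

/-- A structure of interest: an ADMG with a single connected component in which
every vertex has at most one outgoing directed edge, or exactly two outgoing
directed edges and no edge with an arrowhead at it. -/
def IsSOI (σ : MixedGraph V) : Prop :=
  σ.IsADMG ∧ σ.Connected ∧
    ∀ v ∈ σ.verts,
      (∀ ⦃w₁ w₂ : V⦄, σ.dir v w₁ → σ.dir v w₂ → w₁ = w₂) ∨
      ((∃ w₁ w₂, w₁ ≠ w₂ ∧ σ.dir v w₁ ∧ σ.dir v w₂ ∧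
          ∀ w, σ.dir v w → w = w₁ ∨ w = w₂) ∧
        (∀ w, ¬ σ.dir w v) ∧ (∀ w, ¬ σ.bi v w))

/-- A structure of interest `σ` (as a subgraph of the ambient graph) connects
`X` and `Y` under `Z`: it contains a vertex of `X` and a vertex of `Y`, its
roots lie in `X ∪ Y ∪ Z`, and no non-root vertex of `σ` lies in `Z`. -/
def Connects (σ : MixedGraph V) (X Y Z : Set V) : Prop :=
  (σ.verts ∩ X).Nonempty ∧ (σ.verts ∩ Y).Nonempty ∧
    σ.roots ⊆ X ∪ Y ∪ Z ∧ ∀ v ∈ σ.verts, ¬ σ.IsRoot v → v ∉ Z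

/-- The link `l` joins `a` (left) to `b` (right) in `G`. -/
def LinkOk (G : MixedGraph V) (a : V) (l : Link) (b : V) : Prop :=
  match l with
  | .fwd => G.dir a b
  | .bwd => G.dir b a
  | .both => G.bi a b

/-- A walk from `a`, given as the list of successive (link, next vertex) steps. -/
inductive IsWalk (G : MixedGraph V) : V → List (Link × V) → Prop
  | nil (v : V) : IsWalk G v []
  | cons {a b : V} {l : Link} {rest : List (Link × V)} :
      G.LinkOk a l b → IsWalk G b rest → IsWalk G a ((l, b) :: rest)

/-- The vertices visited by a walk. -/
def pathVerts (a : V) (steps : List (Link × V)) : List V := a :: steps.map Prod.snd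

/-- The last vertex of a walk. -/
def lastVert (a : V) (steps : List (Link × V)) : V := (steps.map Prod.snd).getLastD a

/-- A path: a walk visiting pairwise distinct vertices. -/
def IsPath (G : MixedGraph V) (a : V) (steps : List (Link × V)) : Prop :=
  G.IsWalk a steps ∧ (pathVerts a steps).Nodup

/-- Activity of the interior vertex `v`, flanked by links `l₁` and `l₂`,
relative to `Z` : if `v` is a collider it must be an ancestor of `Z`
(in particular possibly in `Z`), otherwise it must avoid `Z`. -/
def ActiveTriple (G : MixedGraph V) (Z : Set V) (l₁ : Link) (v : V) (l₂ : Link) : Prop :=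
  if l₁.headRight && l₂.headLeft then v ∈ G.AncSet Z else v ∉ Z

/-- `X` and `Y` are d-connected given `Z` in `G`: some path from a vertex of
`X` to a vertex of `Y` is active given `Z`. -/
def DConnected (G : MixedGraph V) (X Y Z : Set V) : Prop :=
  ∃ (a : V) (steps : List (Link × V)),
    G.IsPath a steps ∧ a ∈ X ∧ lastVert a steps ∈ Y ∧
    a ∉ Z ∧ lastVert a steps ∉ Z ∧
    List.Chain' (fun s t => G.ActiveTriple Z s.1 s.2 t.1) steps

/-- The mutilated graph `G_{Ā,B̲}` : every edge with an arrowhead at a vertex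
of `A` and every directed edge out of a vertex of `B` is deleted. -/
def mutilate (G : MixedGraph V) (A B : Set V) : MixedGraph V where
  verts := G.verts
  dir a b := G.dir a b ∧ b ∉ A ∧ a ∉ B
  bi a b := G.bi a b ∧ a ∉ A ∧ b ∉ A
  dir_mem := fun _ _ h => G.dir_mem h.1
  bi_mem := fun _ _ h => G.bi_mem h.1
  bi_symm := fun _ _ h => ⟨G.bi_symm h.1, h.2.2, h.2.1⟩

/-- Union of two mixed graphs. -/
def union (G H : MixedGraph V) : MixedGraph V where
  verts := G.verts ∪ H.verts
  dir a b := G.dir a b ∨ H.dir a b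
  bi a b := G.bi a b ∨ H.bi a b
  dir_mem := by
    rintro a b (h | h)
    · exact ⟨Or.inl (G.dir_mem h).1, Or.inl (G.dir_mem h).2⟩
    · exact ⟨Or.inr (H.dir_mem h).1, Or.inr (H.dir_mem h).2⟩
  bi_mem := by
    rintro a b (h | h)
    · exact ⟨Or.inl (G.bi_mem h).1, Or.inl (G.bi_mem h).2⟩
    · exact ⟨Or.inr (H.bi_mem h).1, Or.inr (H.bi_mem h).2⟩
  bi_symm := by
    rintro a b (h | h)
    · exact Or.inl (G.bi_symm h)
    · exact Or.inr (H.bi_symm h)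

/-- Add the directed edge `x → y`. -/
def addDir (G : MixedGraph V) (x y : V) : MixedGraph V where
  verts := G.verts ∪ {x, y}
  dir a b := G.dir a b ∨ (a = x ∧ b = y)
  bi := G.bi
  dir_mem := by
    rintro a b (h | ⟨rfl, rfl⟩)
    · exact ⟨Or.inl (G.dir_mem h).1, Or.inl (G.dir_mem h).2⟩
    · exact ⟨Or.inr (by simp), Or.inr (by simp)⟩
  bi_mem := fun _ _ h => ⟨Or.inl (G.bi_mem h).1, Or.inl (G.bi_mem h).2⟩
  bi_symm := fun _ _ h => G.bi_symm h

/-- Add the bidirected edge `x ↔ y`. -/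
def addBi (G : MixedGraph V) (x y : V) : MixedGraph V where
  verts := G.verts ∪ {x, y}
  dir := G.dir
  bi a b := G.bi a b ∨ (a = x ∧ b = y) ∨ (a = y ∧ b = x)
  dir_mem := fun _ _ h => ⟨Or.inl (G.dir_mem h).1, Or.inl (G.dir_mem h).2⟩
  bi_mem := by
    rintro a b (h | ⟨rfl, rfl⟩ | ⟨rfl, rfl⟩)
    · exact ⟨Or.inl (G.bi_mem h).1, Or.inl (G.bi_mem h).2⟩
    · exact ⟨Or.inr (by simp), Or.inr (by simp)⟩
    · exact ⟨Or.inr (by simp), Or.inr (by simp)⟩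
  bi_symm := by
    rintro a b (h | ⟨rfl, rfl⟩ | ⟨rfl, rfl⟩)
    · exact Or.inl (G.bi_symm h)
    · exact Or.inr (Or.inr ⟨rfl, rfl⟩)
    · exact Or.inr (Or.inl ⟨rfl, rfl⟩)

/-- Delete the directed edge `x → y`. -/
def deleteDir (G : MixedGraph V) (x y : V) : MixedGraph V where
  verts := G.verts
  dir a b := G.dir a b ∧ ¬(a = x ∧ b = y)
  bi := G.bi
  dir_mem := fun _ _ h => G.dir_mem h.1
  bi_mem := fun _ _ h => G.bi_mem h
  bi_symm := fun _ _ h => G.bi_symm h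

/-- Delete the bidirected edge `x ↔ y`. -/
def deleteBi (G : MixedGraph V) (x y : V) : MixedGraph V where
  verts := G.verts
  dir := G.dir
  bi a b := G.bi a b ∧ ¬((a = x ∧ b = y) ∨ (a = y ∧ b = x))
  dir_mem := fun _ _ h => G.dir_mem h
  bi_mem := fun _ _ h => G.bi_mem h.1
  bi_symm := fun _ _ h => ⟨G.bi_symm h.1, fun hc => h.2 (by tauto)⟩

/-- The cluster of micro-variables assigned to the cluster label `c`. -/
def clusterOf (π : V → C) (c : C) : Set V := {v | π v = c}

/-- `G` (an ADMG on all of `V`) is compatible with the cluster-level mixed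
graph `GC` : `GC` is exactly the cluster graph induced by `G` via the
partition `π`. -/
def Compatible (π : V → C) (GC : MixedGraph C) (G : MixedGraph V) : Prop :=
  G.IsADMG ∧ G.verts = Set.univ ∧
    (∀ c d, GC.dir c d ↔ ∃ a b, π a = c ∧ π b = d ∧ G.dir a b) ∧
    (∀ c d, GC.bi c d ↔ ∃ a b, π a = c ∧ π b = d ∧ G.bi a b)

/-- Within each cluster, the indices of the vertices (given by the ambient
linear order on `V`) follow a topological order of `G`. -/
def FollowsTopo [LinearOrder V] (π : V → C) (G : MixedGraph V) : Prop :=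
  ∃ t : V → ℕ, Function.Injective t ∧ (∀ ⦃a b : V⦄, G.dir a b → t a < t b) ∧
    ∀ ⦃a b : V⦄, π a = π b → a < b → t a < t b

/-- The cluster `c` has cardinality at most one. -/
def SingletonCluster (π : V → C) (c : C) : Prop :=
  ∀ ⦃a b : V⦄, π a = c → π b = c → a = b

/-- `GC` contains a directed cycle all of whose clusters have cardinality 1. -/
def HasSingletonCycle (π : V → C) (GC : MixedGraph C) : Prop :=
  ∃ c, Relation.TransGen
    (fun c₁ c₂ => GC.dir c₁ c₂ ∧ SingletonCluster π c₁ ∧ SingletonCluster π c₂) c c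

/-- The canonical compatible graph of `GC` : all bidirected edges between the
relevant clusters; for self-loops all within-cluster edges following the index
order; for each directed edge between distinct clusters the edge from the
first vertex of the source to the last vertex of the target. -/
def canonicalGraph [LinearOrder V] (π : V → C) (GC : MixedGraph C) : MixedGraph V where
  verts := Set.univ
  dir a b :=
    (π a = π b ∧ GC.dir (π a) (π b) ∧ a < b) ∨
    (π a ≠ π b ∧ GC.dir (π a) (π b) ∧
      IsLeast (clusterOf π (π a)) a ∧ IsGreatest (clusterOf π (π b)) b)
  bi a b := a ≠ b ∧ GC.bi (π a) (π b)
  dir_mem := fun _ _ _ => ⟨trivial, trivial⟩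
  bi_mem := fun _ _ _ => ⟨trivial, trivial⟩
  bi_symm := fun _ _ h => ⟨h.1.symm, GC.bi_symm h.2⟩

/-- The unfolded graph of `GC` : the canonical compatible graph together with
all eligible directed edges, i.e. those corresponding to a cluster-level
directed edge whose addition to the canonical graph creates no directed
cycle. -/
def unfoldedGraph [LinearOrder V] (π : V → C) (GC : MixedGraph C) : MixedGraph V where
  verts := Set.univ
  dir a b := (canonicalGraph π GC).dir a b ∨
    (GC.dir (π a) (π b) ∧ ((canonicalGraph π GC).addDir a b).Acyclic)
  bi a b := (canonicalGraph π GC).bi a b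
  dir_mem := fun _ _ _ => ⟨trivial, trivial⟩
  bi_mem := fun _ _ _ => ⟨trivial, trivial⟩
  bi_symm := fun _ _ h => (canonicalGraph π GC).bi_symm h

/-- Failure of rule `i` of Pearl's calculus (atomically) in `G` :
`0` ↦ rule 1, `1` ↦ rule 2, `2` ↦ rule 3. -/
def RuleFails (G : MixedGraph V) (W X Y Z : Set V) (i : Fin 3) : Prop :=
  if i = 0 then (G.mutilate W ∅).DConnected X Y (W ∪ Z)
  else if i = 1 then (G.mutilate W X).DConnected X Y (W ∪ Z)
  else (G.mutilate (W ∪ (X \ (G.mutilate W ∅).AncSet Z)) ∅).DConnected X Y (W ∪ Z)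

end MixedGraph

open MixedGraph

/-! Follow a directed path `R → s → ⋯ → z` of `G` into `Z`. Adding the edge `R → s` to `σ` makes
`R` a non-root, and the only root it can create is `s`: harmless if `s ∈ Z` or `s` is already in
`σ`, and otherwise a new root that is still an ancestor of `Z`, so we recurse along the path.
If `s` is a fork `c ← s → w` of `σ`, it carries no arrowhead, so `R` reaches one of its children,
say `w`, without passing through `s`; then replacing the edge `s → w` by `R → s` keeps `σ`
connected, and `s` is left with the single outgoing edge `s → c`. -/

namespace MixedGraph

open Relation

variable {V : Type*} {G σ τ : MixedGraph V} {Z : Set V} {a b v x y R s : V}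

theorem Adj.symm (h : G.Adj a b) : G.Adj b a := by
  rcases h with h | h | h
  exacts [Or.inr (Or.inl h), Or.inl h, Or.inr (Or.inr (G.bi_symm h))]

theorem reflTransGen_adj_symm (h : ReflTransGen G.Adj a b) : ReflTransGen G.Adj b a :=
  ReflTransGen.mono (fun _ _ h => Adj.symm h) _ _ (reflTransGen_swap.mpr h)

theorem IsSubgraph.trans (hστ : σ.IsSubgraph τ) (hτG : τ.IsSubgraph G) : σ.IsSubgraph G :=
  ⟨hστ.1.trans hτG.1, fun _ _ h => hτG.2.1 (hστ.2.1 h), fun _ _ h => hτG.2.2 (hστ.2.2 h)⟩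

theorem deleteDir_isSubgraph : (G.deleteDir x y).IsSubgraph G :=
  ⟨subset_rfl, fun _ _ h => h.1, fun _ _ h => h⟩

theorem IsSubgraph.addDir (hτG : τ.IsSubgraph G) (hRs : G.dir R s) :
    (τ.addDir R s).IsSubgraph G := by
  refine ⟨Set.union_subset hτG.1 ?_, ?_, fun _ _ h => hτG.2.2 h⟩
  · rintro v (rfl | rfl)
    exacts [(G.dir_mem hRs).1, (G.dir_mem hRs).2]
  · rintro a b (h | ⟨rfl, rfl⟩)
    exacts [hτG.2.1 h, hRs]

theorem IsADMG.mono (hG : G.IsADMG) (hσG : σ.IsSubgraph G) : σ.IsADMG :=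
  ⟨fun _ _ hab hba => hG.1 (hσG.2.1 hab) (ReflTransGen.mono (fun _ _ h => hσG.2.1 h) _ _ hba),
    fun v h => hG.2.1 v (hσG.2.1 h), fun v h => hG.2.2 v (hσG.2.2 h)⟩

def IsSOIAt (σ : MixedGraph V) (v : V) : Prop :=
  (∀ ⦃w₁ w₂ : V⦄, σ.dir v w₁ → σ.dir v w₂ → w₁ = w₂) ∨
    ((∃ w₁ w₂, w₁ ≠ w₂ ∧ σ.dir v w₁ ∧ σ.dir v w₂ ∧ ∀ w, σ.dir v w → w = w₁ ∨ w = w₂) ∧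
      (∀ w, ¬ σ.dir w v) ∧ (∀ w, ¬ σ.bi v w))

theorem IsSOI.isSOIAt (hσ : σ.IsSOI) (v : V) : σ.IsSOIAt v := by
  by_cases hv : v ∈ σ.verts
  · exact hσ.2.2 v hv
  · exact Or.inl fun w _ h _ => absurd (σ.dir_mem h).1 hv

theorem IsSOIAt.of_dir_of_bi (h : σ.IsSOIAt v) (hout : ∀ w, τ.dir v w ↔ σ.dir v w)
    (hin : ∀ w, τ.dir w v → σ.dir w v) (hbi : ∀ w, τ.bi v w → σ.bi v w) : τ.IsSOIAt v := by
  rcases h with h | ⟨⟨w₁, w₂, hne, h₁, h₂, hall⟩, hnin, hnbi⟩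
  · exact Or.inl fun _ _ h₁ h₂ => h ((hout _).1 h₁) ((hout _).1 h₂)
  · exact Or.inr ⟨⟨w₁, w₂, hne, (hout _).2 h₁, (hout _).2 h₂, fun w hw => hall w ((hout w).1 hw)⟩,
      fun w hw => hnin w (hin w hw), fun w hw => hnbi w (hbi w hw)⟩

theorem IsSOIAt.deleteDir (h : σ.IsSOIAt v) (hvx : v ≠ x) : (σ.deleteDir x y).IsSOIAt v :=
  h.of_dir_of_bi (fun _ => ⟨And.left, fun h => ⟨h, fun hc => hvx hc.1⟩⟩)
    (fun _ => And.left) fun _ => id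

theorem Connected.of_reflTransGen (hσ : σ.Connected) (hverts : σ.verts ⊆ τ.verts)
    (hadj : ∀ ⦃a b⦄, σ.Adj a b → ReflTransGen τ.Adj a b)
    (hreach : ∀ v ∈ τ.verts, ∃ u ∈ σ.verts, ReflTransGen τ.Adj u v) : τ.Connected := by
  refine ⟨hσ.1.mono hverts, fun a ha b hb => ?_⟩
  obtain ⟨u, hu, hua⟩ := hreach a ha
  obtain ⟨u', hu', hub⟩ := hreach b hb
  have huu' : ReflTransGen τ.Adj u u' := ReflTransGen.lift' id hadj _ _ (hσ.2 u hu u' hu')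
  exact (reflTransGen_adj_symm hua).trans (huu'.trans hub)

theorem Connected.addDir (hσ : σ.Connected) (hR : R ∈ σ.verts) : (σ.addDir R s).Connected := by
  refine hσ.of_reflTransGen Set.subset_union_left ?_ ?_
  · rintro a b (h | h | h)
    exacts [.single (Or.inl (Or.inl h)), .single (Or.inr (Or.inl (Or.inl h))),
      .single (Or.inr (Or.inr h))]
  · rintro v (hv | rfl | rfl)
    exacts [⟨v, hv, .refl⟩, ⟨v, hR, .refl⟩, ⟨R, hR, .single (Or.inl (Or.inr ⟨rfl, rfl⟩))⟩]

theorem isSOIAt_addDir (hτ : ∀ v, τ.IsSOIAt v) (hR : ∀ w, ¬ τ.dir R w)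
    (hs : ∀ ⦃w₁ w₂⦄, τ.dir s w₁ → τ.dir s w₂ → w₁ = w₂) (v : V) : (τ.addDir R s).IsSOIAt v := by
  by_cases hvR : v = R
  · subst hvR
    left
    rintro w₁ w₂ (h₁ | ⟨-, rfl⟩) (h₂ | ⟨-, rfl⟩)
    exacts [(hR _ h₁).elim, (hR _ h₁).elim, (hR _ h₂).elim, rfl]
  have hout : ∀ w, (τ.addDir R s).dir v w ↔ τ.dir v w := fun w =>
    ⟨fun h => h.resolve_right fun hc => hvR hc.1, Or.inl⟩
  by_cases hvs : v = s
  · subst hvs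
    exact Or.inl fun _ _ h₁ h₂ => hs ((hout _).1 h₁) ((hout _).1 h₂)
  · exact (hτ v).of_dir_of_bi hout (fun w h => h.resolve_right fun hc => hvs hc.2)
      fun _ => id

theorem isSOI_addDir (hG : G.IsADMG) (hτG : τ.IsSubgraph G) (hRs : G.dir R s)
    (hτ : ∀ v, τ.IsSOIAt v) (hR : ∀ w, ¬ τ.dir R w)
    (hs : ∀ ⦃w₁ w₂⦄, τ.dir s w₁ → τ.dir s w₂ → w₁ = w₂) (hconn : (τ.addDir R s).Connected) :
    (τ.addDir R s).IsSOI :=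
  ⟨hG.mono (hτG.addDir hRs), hconn, fun v _ => isSOIAt_addDir hτ hR hs v⟩

theorem roots_addDir_subset : (τ.addDir R s).roots ⊆ (τ.roots \ {R}) ∪ ({s} \ τ.verts) := by
  rintro v ⟨hv, hroot⟩
  have hvR : v ≠ R := fun h => hroot s (Or.inr ⟨h, rfl⟩)
  by_cases hvτ : v ∈ τ.verts
  · exact Or.inl ⟨⟨hvτ, fun w hw => hroot w (Or.inl hw)⟩, hvR⟩
  · rcases hv with hv | rfl | rfl
    exacts [(hvτ hv).elim, (hvR rfl).elim, Or.inr ⟨rfl, hvτ⟩]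

theorem roots_deleteDir_subset {z : V} (hxz : G.dir x z) (hzy : z ≠ y) :
    (G.deleteDir x y).roots ⊆ G.roots := by
  rintro v ⟨hv, hroot⟩
  refine ⟨hv, fun w hw => ?_⟩
  by_cases hvw : v = x ∧ w = y
  · obtain ⟨rfl, -⟩ := hvw
    exact hroot z ⟨hxz, fun h => hzy h.2⟩
  · exact hroot w ⟨hw, hvw⟩

def TailsAvoid (σ : MixedGraph V) (Z : Set V) : Prop := ∀ ⦃v w⦄, σ.dir v w → v ∉ Z

theorem tailsAvoid_iff : σ.TailsAvoid Z ↔ ∀ v ∈ σ.verts, ¬ σ.IsRoot v → v ∉ Z := by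
  refine ⟨fun h v hv hroot => ?_, fun h v w hvw => h v (σ.dir_mem hvw).1 fun hr => hr.2 w hvw⟩
  by_contra hvZ
  exact hroot ⟨hv, fun w hvw => h hvw hvZ⟩

theorem TailsAvoid.addDir (h : τ.TailsAvoid Z) (hRZ : R ∉ Z) : (τ.addDir R s).TailsAvoid Z := by
  rintro v w (hvw | ⟨rfl, -⟩)
  exacts [h hvw, hRZ]

theorem TailsAvoid.deleteDir (h : σ.TailsAvoid Z) : (σ.deleteDir x y).TailsAvoid Z :=
  fun _ _ hvw => h hvw.1

theorem Connected.exists_adj_reflTransGen_avoiding (hσ : σ.Connected) (hs : s ∈ σ.verts)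
    (hv : v ∈ σ.verts) (hvs : v ≠ s) :
    ∃ w, σ.Adj s w ∧ ReflTransGen (fun a b => σ.Adj a b ∧ a ≠ s ∧ b ≠ s) v w := by
  suffices key : ∀ v, ReflTransGen σ.Adj s v → v ≠ s →
      ∃ w, σ.Adj s w ∧ ReflTransGen (fun a b => σ.Adj a b ∧ a ≠ s ∧ b ≠ s) v w from
    key v (hσ.2 s hs v hv) hvs
  intro v hsv
  induction hsv with
  | refl => exact fun h => (h rfl).elim
  | @tail b c _ hbc ih =>
    intro hcs
    by_cases hbs : b = s
    · subst hbs
      exact ⟨c, hbc, .refl⟩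
    · obtain ⟨w, hsw, hbw⟩ := ih hbs
      exact ⟨w, hsw, .head ⟨hbc.symm, hcs, hbs⟩ hbw⟩

theorem IsSOI.exists_removeRoot_of_fork_reach (hσ : σ.IsSOI) (hG : G.IsADMG) (hσG : σ.IsSubgraph G)
    (hZσ : σ.TailsAvoid Z) (hR : σ.IsRoot R) (hRZ : R ∉ Z) (hRs : G.dir R s) {c w : V}
    (hsc : σ.dir s c) (hcw : c ≠ w) (hout : ∀ u, σ.dir s u → u = c ∨ u = w)
    (hRw : ReflTransGen (fun a b => σ.Adj a b ∧ a ≠ s ∧ b ≠ s) R w) :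
    ∃ σ' : MixedGraph V, σ'.IsSOI ∧ σ'.IsSubgraph G ∧ σ.verts ⊆ σ'.verts ∧
      σ'.TailsAvoid Z ∧ σ'.roots \ Z ⊆ (σ.roots \ Z) \ {R} := by
  set τ := σ.deleteDir s w
  have hs : ∀ ⦃w₁ w₂⦄, τ.dir s w₁ → τ.dir s w₂ → w₁ = w₂ := by
    rintro w₁ w₂ ⟨h₁, h₁w⟩ ⟨h₂, h₂w⟩
    rw [(hout w₁ h₁).resolve_right fun h => h₁w ⟨rfl, h⟩,
      (hout w₂ h₂).resolve_right fun h => h₂w ⟨rfl, h⟩]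
  have hτ : ∀ v, τ.IsSOIAt v := fun v => by
    by_cases hvs : v = s
    · exact hvs ▸ Or.inl hs
    · exact (hσ.isSOIAt v).deleteDir hvs
  have hsσ : s ∈ σ.verts := (σ.dir_mem hsc).1
  have hRw' : ReflTransGen (τ.addDir R s).Adj R w := by
    refine ReflTransGen.mono ?_ _ _ hRw
    rintro a b ⟨h | h | h, has, hbs⟩
    exacts [Or.inl (Or.inl ⟨h, fun hc => has hc.1⟩),
      Or.inr (Or.inl (Or.inl ⟨h, fun hc => hbs hc.1⟩)), Or.inr (Or.inr h)]
  have hsw : ReflTransGen (τ.addDir R s).Adj s w := .head (Or.inr (Or.inl (Or.inr ⟨rfl, rfl⟩))) hRw'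
  have hconn : (τ.addDir R s).Connected := by
    refine hσ.2.1.of_reflTransGen Set.subset_union_left ?_ ?_
    · rintro a b (h | h | h)
      · by_cases hab : a = s ∧ b = w
        · obtain ⟨rfl, rfl⟩ := hab
          exact hsw
        · exact .single (Or.inl (Or.inl ⟨h, hab⟩))
      · by_cases hba : b = s ∧ a = w
        · obtain ⟨rfl, rfl⟩ := hba
          exact reflTransGen_adj_symm hsw
        · exact .single (Or.inr (Or.inl (Or.inl ⟨h, hba⟩)))
      · exact .single (Or.inr (Or.inr h))
    · rintro v (hv | rfl | rfl)
      exacts [⟨v, hv, .refl⟩, ⟨v, hR.1, .refl⟩, ⟨v, hsσ, .refl⟩]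
  refine ⟨τ.addDir R s, isSOI_addDir hG (deleteDir_isSubgraph.trans hσG) hRs hτ
    (fun u h => hR.2 u h.1) hs hconn, (deleteDir_isSubgraph.trans hσG).addDir hRs,
    Set.subset_union_left, hZσ.deleteDir.addDir hRZ, ?_⟩
  rintro v ⟨hv, hvZ⟩
  rcases roots_addDir_subset hv with ⟨hvτ, hvR⟩ | ⟨rfl, hvτ⟩
  · exact ⟨⟨roots_deleteDir_subset hsc hcw hvτ, hvZ⟩, hvR⟩
  · exact (hvτ hsσ).elim

theorem IsSOI.exists_removeRoot_of_fork (hσ : σ.IsSOI) (hG : G.IsADMG) (hσG : σ.IsSubgraph G)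
    (hZσ : σ.TailsAvoid Z) (hR : σ.IsRoot R) (hRZ : R ∉ Z) (hRs : G.dir R s)
    (hfork : ¬ ∀ ⦃w₁ w₂⦄, σ.dir s w₁ → σ.dir s w₂ → w₁ = w₂) :
    ∃ σ' : MixedGraph V, σ'.IsSOI ∧ σ'.IsSubgraph G ∧ σ.verts ⊆ σ'.verts ∧
      σ'.TailsAvoid Z ∧ σ'.roots \ Z ⊆ (σ.roots \ Z) \ {R} := by
  obtain ⟨⟨c₁, c₂, hne, h₁, h₂, hall⟩, hnin, hnbi⟩ := (hσ.isSOIAt s).resolve_left hfork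
  have hRne : R ≠ s := fun h => hR.2 c₁ (h ▸ h₁)
  obtain ⟨w, hadj, hRw⟩ :=
    hσ.2.1.exists_adj_reflTransGen_avoiding (σ.dir_mem h₁).1 hR.1 hRne
  have hsw : σ.dir s w := hadj.resolve_right fun h => h.elim (hnin w) (hnbi w)
  rcases hall w hsw with rfl | rfl
  · exact hσ.exists_removeRoot_of_fork_reach hG hσG hZσ hR hRZ hRs h₂ hne.symm
      (fun u hu => (hall u hu).symm) hRw
  · exact hσ.exists_removeRoot_of_fork_reach hG hσG hZσ hR hRZ hRs h₁ hne hall hRw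

theorem IsSOI.exists_removeRoot_of_anc (hσ : σ.IsSOI) (hG : G.IsADMG) {z : V} (hz : z ∈ Z)
    (hRz : G.Anc R z) (hσG : σ.IsSubgraph G) (hZσ : σ.TailsAvoid Z) (hR : σ.IsRoot R)
    (hRZ : R ∉ Z) :
    ∃ σ' : MixedGraph V, σ'.IsSOI ∧ σ'.IsSubgraph G ∧ σ.verts ⊆ σ'.verts ∧
      σ'.TailsAvoid Z ∧ σ'.roots \ Z ⊆ (σ.roots \ Z) \ {R} := by
  induction hRz using ReflTransGen.head_induction_on generalizing σ with
  | refl => exact (hRZ hz).elim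
  | @head R s hRs _ ih =>
    by_cases hs : ∀ ⦃w₁ w₂⦄, σ.dir s w₁ → σ.dir s w₂ → w₁ = w₂
    swap
    · exact hσ.exists_removeRoot_of_fork hG hσG hZσ hR hRZ hRs hs
    have hσ₁ := isSOI_addDir hG hσG hRs hσ.isSOIAt hR.2 hs (hσ.2.1.addDir hR.1)
    have hZσ₁ : (σ.addDir R s).TailsAvoid Z := hZσ.addDir hRZ
    by_cases hstop : s ∈ Z ∨ s ∈ σ.verts
    · refine ⟨σ.addDir R s, hσ₁, hσG.addDir hRs, Set.subset_union_left, hZσ₁, ?_⟩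
      rintro v ⟨hv, hvZ⟩
      rcases roots_addDir_subset hv with ⟨hvσ, hvR⟩ | ⟨rfl, hvσ⟩
      · exact ⟨⟨hvσ, hvZ⟩, hvR⟩
      · exact (hstop.elim hvZ hvσ).elim
    rw [not_or] at hstop
    have hsroot : (σ.addDir R s).IsRoot s := by
      refine ⟨Or.inr (Or.inr rfl), fun w h => hstop.2 ?_⟩
      rcases h with h | ⟨rfl, -⟩
      exacts [(σ.dir_mem h).1, hR.1]
    obtain ⟨σ', hσ', hσ'G, hverts, hZσ', hroots⟩ :=
      ih hσ₁ (hσG.addDir hRs) hZσ₁ hsroot hstop.1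
    refine ⟨σ', hσ', hσ'G, Set.subset_union_left.trans hverts, hZσ', fun v hv => ?_⟩
    obtain ⟨⟨hv₁, hvZ⟩, hvs⟩ := hroots hv
    rcases roots_addDir_subset hv₁ with ⟨hvσ, hvR⟩ | ⟨rfl, -⟩
    · exact ⟨⟨hvσ, hvZ⟩, hvR⟩
    · exact (hvs rfl).elim

end MixedGraph

theorem stmt6_general {V : Type} (G : MixedGraph V) (hG : G.IsADMG)
    (X Y Z : Set V)
    (σ : MixedGraph V) (hσ : σ.IsSOI) (hsub : σ.IsSubgraph G)
    (hX : (σ.verts ∩ X).Nonempty) (hY : (σ.verts ∩ Y).Nonempty)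
    (hZ : ∀ v ∈ σ.verts, ¬ σ.IsRoot v → v ∉ Z)
    (R : V) (hR : σ.IsRoot R) (hRZ : R ∉ Z) (hRanc : R ∈ G.AncSet Z) :
    ∃ σ' : MixedGraph V, σ'.IsSOI ∧ σ'.IsSubgraph G ∧
      (σ'.verts ∩ X).Nonempty ∧ (σ'.verts ∩ Y).Nonempty ∧
      (∀ v ∈ σ'.verts, ¬ σ'.IsRoot v → v ∉ Z) ∧
      σ'.roots \ Z ⊆ (σ.roots \ Z) \ {R} := by
  obtain ⟨z, hz, hRz⟩ := hRanc
  obtain ⟨σ', hσ', hσ'G, hverts, hZσ', hroots⟩ :=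
    hσ.exists_removeRoot_of_anc hG hz hRz hsub (tailsAvoid_iff.2 hZ) hR hRZ
  exact ⟨σ', hσ', hσ'G, hX.mono (Set.inter_subset_inter_left X hverts),
    hY.mono (Set.inter_subset_inter_left Y hverts), tailsAvoid_iff.1 hZσ', hroots⟩

/-- add a path to remove a problematic root. -/
theorem stmt6 {V : Type} [Fintype V] (G : MixedGraph V) (hG : G.IsADMG)
    (X Y Z : Set V) (hXV : X ⊆ G.verts) (hYV : Y ⊆ G.verts) (hZV : Z ⊆ G.verts)
    (hXY : Disjoint X Y) (hXZ : Disjoint X Z) (hYZ : Disjoint Y Z)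
    (σ : MixedGraph V) (hσ : σ.IsSOI) (hsub : σ.IsSubgraph G)
    (hX : (σ.verts ∩ X).Nonempty) (hY : (σ.verts ∩ Y).Nonempty)
    (hZ : ∀ v ∈ σ.verts, ¬ σ.IsRoot v → v ∉ Z)
    (R : V) (hR : σ.IsRoot R) (hRZ : R ∉ Z) (hRanc : R ∈ G.AncSet Z) :
    ∃ σ' : MixedGraph V, σ'.IsSOI ∧ σ'.IsSubgraph G ∧
      (σ'.verts ∩ X).Nonempty ∧ (σ'.verts ∩ Y).Nonempty ∧
      (∀ v ∈ σ'.verts, ¬ σ'.IsRoot v → v ∉ Z) ∧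
      σ'.roots \ Z ⊆ (σ.roots \ Z) \ {R} :=
  stmt6_general G hG X Y Z σ hσ hsub hX hY hZ R hR hRZ hRanc
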